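/- Every necklace bubble of valency at least 4 contains a 2-dipole, i.e. a pair of a black node and a white node joined by exactly two colored lines. -/

import Mathlib

/-!  Rank-4 tensorial bubbles and Feynman graphs, following
Carrozza–Lahoche–Oriti, "Renormalizable Group Field Theory beyond melonic
diagrams: an example in rank four". -/

open Finset

/-- A rank-4 bubble: a connected bipartite 4-colored regular graph, given by
finite sets of black and white nodes together with, for each color, a perfect
matching (bijection) between black and white nodes. -/
structure Bubble where
  B : Type
  W : Type
  [fB : Fintype B]
  [fW : Fintype W]
  [dB : DecidableEq B]
  [dW : DecidableEq W]
  /-- for each color `i`, the perfect matching of color `i` -/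
  edge : Fin 4 → B ≃ W
  /-- connectedness: the only subsets of nodes closed under colored adjacency
  are `∅` and `univ` -/
  conn : ∀ S : Finset (B ⊕ W),
    (∀ x ∈ S, ∀ y : B ⊕ W,
      (∃ i : Fin 4, (∃ u : B, x = Sum.inl u ∧ y = Sum.inr (edge i u)) ∨
        (∃ u : B, y = Sum.inl u ∧ x = Sum.inr (edge i u))) → y ∈ S) →
    S = ∅ ∨ S = Finset.univ

attribute [instance] Bubble.fB Bubble.fW Bubble.dB Bubble.dW

/-- The valency of a bubble: its total number of nodes. -/
def Bubble.valency (b : Bubble) : ℕ := Fintype.card b.B + Fintype.card b.W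

/-- Isomorphism of bubbles (color-preserving). -/
def Bubble.Iso (b b' : Bubble) : Prop :=
  ∃ (eB : b.B ≃ b'.B) (eW : b.W ≃ b'.W), ∀ (i : Fin 4) (x : b.B),
    eW (b.edge i x) = b'.edge i (eB x)

/-- The elementary 2-valent bubble. -/
def twoValent : Bubble where
  B := PUnit
  W := PUnit
  edge := fun _ => Equiv.refl PUnit
  conn := by
    intro S hS
    rcases S.eq_empty_or_nonempty with h | ⟨x, hx⟩
    · exact Or.inl h
    · right
      ext y
      simp only [Finset.mem_univ, iff_true]
      rcases x with ⟨⟩ | ⟨⟩ <;> rcases y with ⟨⟩ | ⟨⟩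
      · exact hx
      · exact hS _ hx _ ⟨0, Or.inl ⟨PUnit.unit, rfl, rfl⟩⟩
      · exact hS _ hx _ ⟨0, Or.inr ⟨PUnit.unit, rfl, rfl⟩⟩
      · exact hx

/-- The elementary necklace in which color `1` (index `0`) is paired with the
color of index `ℓ.succ`, `ℓ : Fin 3`: its four nodes form a 4-cycle along which
double lines with the colors `{0, ℓ.succ}` alternate with double lines carrying
the complementary pair of colors. -/
def elemNecklace (ℓ : Fin 3) : Bubble where
  B := Fin 2
  W := Fin 2
  edge := fun c => if c = 0 ∨ c = ℓ.succ then Equiv.refl (Fin 2) else Equiv.swap 0 1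
  conn := by fin_cases ℓ <;> decide

/-- The 4-valent melonic bubble of color `ℓ`. -/
def melon4 (ℓ : Fin 4) : Bubble where
  B := Fin 2
  W := Fin 2
  edge := fun c => if c = ℓ then Equiv.swap 0 1 else Equiv.refl (Fin 2)
  conn := by fin_cases ℓ <;> decide

/-- The colored matchings of the connected sum of `b₁` and `b₂` at a black node
`n₁` of `b₁` and a white node `n₂` of `b₂`: delete `n₁, n₂` and join the
dangling colored half-lines according to their colors. -/
def connSumEdge (b₁ b₂ : Bubble) (n₁ : b₁.B) (n₂ : b₂.W) (i : Fin 4) :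
    ({x : b₁.B // x ≠ n₁} ⊕ b₂.B) → (b₁.W ⊕ {y : b₂.W // y ≠ n₂})
  | Sum.inl x => Sum.inl (b₁.edge i x.1)
  | Sum.inr y =>
      if h : b₂.edge i y = n₂ then Sum.inl (b₁.edge i n₁)
      else Sum.inr ⟨b₂.edge i y, h⟩

/-- `b₃` is the connected sum of `b₁` and `b₂` at `n₁` and `n₂`. -/
def IsConnSumAt (b₃ b₁ b₂ : Bubble) (n₁ : b₁.B) (n₂ : b₂.W) : Prop :=
  ∃ (eB : b₃.B ≃ ({x : b₁.B // x ≠ n₁} ⊕ b₂.B))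
    (eW : b₃.W ≃ (b₁.W ⊕ {y : b₂.W // y ≠ n₂})),
    ∀ (i : Fin 4) (x : b₃.B), eW (b₃.edge i x) = connSumEdge b₁ b₂ n₁ n₂ i (eB x)

/-- The set `𝔹` of necklace bubbles: the 2-valent bubble together with
everything generated by the three elementary necklaces under connected sums. -/
inductive IsNecklace : Bubble → Prop
  | two {b : Bubble} : b.Iso twoValent → IsNecklace b
  | elem {b : Bubble} (ℓ : Fin 3) : b.Iso (elemNecklace ℓ) → IsNecklace b
  | sum {b b₁ b₂ : Bubble} (n₁ : b₁.B) (n₂ : b₂.W) :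
      IsNecklace b₁ → IsNecklace b₂ → IsConnSumAt b b₁ b₂ n₁ n₂ → IsNecklace b

/-- `(n, m)` is a `k`-dipole of the bubble `b`: `n` and `m` are joined by
exactly `k` colored lines. -/
def Bubble.IsDipole (b : Bubble) (n : b.B) (m : b.W) (k : ℕ) : Prop :=
  (Finset.univ.filter fun i : Fin 4 => b.edge i n = m).card = k

/-- The colored matchings of the bubble obtained from `b` by contracting the
pair of nodes `(n, m)`: delete `n`, `m` and all colored lines between them, and
reconnect the dangling colored half-lines according to their colors. -/
def contractEdge (b : Bubble) (n : b.B) (m : b.W) (i : Fin 4)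
    (x : {x : b.B // x ≠ n}) : {y : b.W // y ≠ m} :=
  if h : b.edge i x.1 = m then
    ⟨b.edge i n, fun hm => x.2 ((b.edge i).injective (h.trans hm.symm))⟩
  else ⟨b.edge i x.1, h⟩

/-- `b'` is the bubble obtained from `b` by contracting the dipole `(n, m)`. -/
def Bubble.IsContractionAt (b' b : Bubble) (n : b.B) (m : b.W) : Prop :=
  ∃ (eB : b'.B ≃ {x : b.B // x ≠ n}) (eW : b'.W ≃ {y : b.W // y ≠ m}),
    ∀ (i : Fin 4) (x : b'.B), eW (b'.edge i x) = contractEdge b n m i (eB x)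

/-- A Feynman graph: a finite collection of bubbles (the vertices) together
with 0-lines, each joining a black node to a white node, every node being
incident to at most one 0-line. Nodes not incident to a 0-line carry external
legs. -/
structure FGraph where
  V : Type
  [fV : Fintype V]
  [dV : DecidableEq V]
  bub : V → Bubble
  L : Type
  [fL : Fintype L]
  [dL : DecidableEq L]
  /-- the black endpoint of a 0-line -/
  lb : L → Σ v : V, (bub v).B
  /-- the white endpoint of a 0-line -/
  lw : L → Σ v : V, (bub v).W
  lb_inj : Function.Injective lb
  lw_inj : Function.Injective lw

attribute [instance] FGraph.fV FGraph.dV FGraph.fL FGraph.dL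

/-- The black nodes of a Feynman graph. -/
abbrev FGraph.NB (G : FGraph) : Type := Σ v : G.V, (G.bub v).B

/-- The white nodes of a Feynman graph. -/
abbrev FGraph.NW (G : FGraph) : Type := Σ v : G.V, (G.bub v).W

/-- The colored line of color `i` leaving the black node `x`. -/
def FGraph.colorMap (G : FGraph) (i : Fin 4) (x : G.NB) : G.NW :=
  ⟨x.1, (G.bub x.1).edge i x.2⟩

/-- `L(𝒢)`: the number of 0-lines. -/
def FGraph.numL (G : FGraph) : ℕ := Fintype.card G.L

/-- `V(𝒢)`: the number of vertices (bubbles). -/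
def FGraph.numV (G : FGraph) : ℕ := Fintype.card G.V

/-- `N(𝒢)`: the number of external legs. -/
def FGraph.numN (G : FGraph) : ℕ :=
  (Fintype.card G.NB - Fintype.card G.L) + (Fintype.card G.NW - Fintype.card G.L)

/-- `l'` is the successor of `l` in the face of color `i`: the white endpoint
of `l'` is joined by a color-`i` line to the black endpoint of `l`. -/
def FGraph.NextRel (G : FGraph) (i : Fin 4) (l l' : G.L) : Prop :=
  G.lw l' = G.colorMap i (G.lb l)

/-- `C` is (the set of 0-lines of) an internal face of color `i`: a cycle of
the successor relation, i.e. a minimal nonempty set in which every 0-line has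
its successor. -/
def FGraph.IsFace (G : FGraph) (i : Fin 4) (C : Finset G.L) : Prop :=
  C.Nonempty ∧ (∀ l ∈ C, ∃ l' ∈ C, G.NextRel i l l') ∧
    ∀ D : Finset G.L, D ⊆ C → D.Nonempty →
      (∀ l ∈ D, ∃ l' ∈ D, G.NextRel i l l') → D = C

/-- `F(𝒢)`: the number of internal faces. -/
noncomputable def FGraph.numF (G : FGraph) : ℕ :=
  Set.ncard {p : Fin 4 × Finset G.L | G.IsFace p.1 p.2}

open Classical in
/-- The line/face incidence matrix `ε`, with internal faces coherently oriented
so that every 0-line occurs in a face it belongs to with matching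
orientation. -/
noncomputable def FGraph.epsMat (G : FGraph) :
    Matrix G.L (Fin 4 × Finset G.L) ℚ :=
  fun l p => if G.IsFace p.1 p.2 ∧ l ∈ p.2 then 1 else 0

/-- `R(𝒢)`: the rank of the incidence matrix `ε` over `ℚ`. -/
noncomputable def FGraph.numR (G : FGraph) : ℕ := G.epsMat.rank

/-- The Abelian degree of divergence `ω(𝒢) = -2L + 3(F - R)`. -/
noncomputable def FGraph.omega (G : FGraph) : ℤ :=
  -2 * (G.numL : ℤ) + 3 * ((G.numF : ℤ) - (G.numR : ℤ))

/-- `ρ(𝒢) = (L - V + 1) - (F - R)`. -/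
noncomputable def FGraph.rho (G : FGraph) : ℤ :=
  ((G.numL : ℤ) - (G.numV : ℤ) + 1) - ((G.numF : ℤ) - (G.numR : ℤ))

/-- Adjacency of the vertices `a, b` through a 0-line belonging to `T`. -/
def FGraph.VAdjOn (G : FGraph) (T : Finset G.L) (a b : G.V) : Prop :=
  ∃ l ∈ T, ((G.lb l).1 = a ∧ (G.lw l).1 = b) ∨ ((G.lb l).1 = b ∧ (G.lw l).1 = a)

/-- Adjacency of the vertices `a, b` through some 0-line. -/
def FGraph.VAdj (G : FGraph) (a b : G.V) : Prop :=
  ∃ l : G.L, ((G.lb l).1 = a ∧ (G.lw l).1 = b) ∨ ((G.lb l).1 = b ∧ (G.lw l).1 = a)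

/-- Connectedness of a Feynman graph. -/
def FGraph.Connected (G : FGraph) : Prop :=
  Nonempty G.V ∧ ∀ v v' : G.V, Relation.ReflTransGen G.VAdj v v'

/-- `T` is a spanning tree of 0-lines of `𝒢`. -/
def FGraph.IsSpanningTree (G : FGraph) (T : Finset G.L) : Prop :=
  T.card + 1 = Fintype.card G.V ∧
    ∀ v v' : G.V, Relation.ReflTransGen (G.VAdjOn T) v v'

/-- Rerouting of a color-`i` half-line through the contracted lines `T`:
as long as the reached white node is an endpoint of a contracted line, jump to
the color-`i` line leaving the black endpoint of that contracted line. -/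
noncomputable def FGraph.reroute (G : FGraph) (T : Finset G.L) (i : Fin 4) :
    ℕ → G.NW → G.NW
  | 0, w => w
  | fuel + 1, w =>
      if h : ∃ l ∈ T, G.lw l = w then
        G.reroute T i fuel (G.colorMap i (G.lb h.choose))
      else w

/-- `G'` is the Feynman graph obtained from `G` by contracting all the 0-lines
of `T` (deleting their end nodes and the colored lines between them, and
reconnecting the dangling colored half-lines by colors). -/
def FGraph.IsQuotientBy (G' G : FGraph) (T : Finset G.L) : Prop :=
  ∃ (eL : G'.L ≃ {l : G.L // l ∉ T})
    (eB : G'.NB ≃ {x : G.NB // ∀ l ∈ T, G.lb l ≠ x})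
    (eW : G'.NW ≃ {y : G.NW // ∀ l ∈ T, G.lw l ≠ y}),
    (∀ l' : G'.L,
      (eB (G'.lb l')).1 = G.lb (eL l').1 ∧ (eW (G'.lw l')).1 = G.lw (eL l').1) ∧
    ∀ (i : Fin 4) (x : G'.NB),
      (eW (G'.colorMap i x)).1 = G.reroute T i T.card (G.colorMap i (eB x).1)

/-- `G'` is the Feynman graph obtained from `G` by contracting the 0-line `l`. -/
def FGraph.IsContractionAt (G' G : FGraph) (l : G.L) : Prop :=
  FGraph.IsQuotientBy G' G {l}

/-- The 0-line `l` is a `k`-dipole: its two end nodes are joined by exactly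
`k - 1` colored lines. -/
def FGraph.IsDipoleLine (G : FGraph) (l : G.L) (k : ℕ) : Prop :=
  (Finset.univ.filter fun i : Fin 4 => G.colorMap i (G.lb l) = G.lw l).card = k - 1

/-- A Feynman graph is 3-dipole contractible if its 0-lines can be contracted
one after the other, each being a 3-dipole at the moment of its contraction. -/
inductive DipoleContractible : FGraph → Prop
  | nil {G : FGraph} : Fintype.card G.L = 0 → DipoleContractible G
  | step {G G' : FGraph} (l : G.L) : G.IsDipoleLine l 3 →
      FGraph.IsContractionAt G' G l → DipoleContractible G' → DipoleContractible G

/-- A necklace graph: a connected Feynman graph all of whose vertices are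
necklace bubbles. -/
def FGraph.IsNecklaceGraph (G : FGraph) : Prop :=
  G.Connected ∧ ∀ v : G.V, IsNecklace (G.bub v)

/-- `r ∈ ℛ₂(b)`: a Feynman graph with a single vertex `b` and exactly two
external legs. -/
def IsR2 (r : FGraph) (b : Bubble) : Prop :=
  Fintype.card r.V = 1 ∧ (∀ v : r.V, (r.bub v).Iso b) ∧ r.numN = 2

/-- `M = max_{r ∈ ℛ₂(b)} ω(r)`. -/
def IsMaxOmega2 (b : Bubble) (M : ℤ) : Prop :=
  (∃ r : FGraph, IsR2 r b ∧ r.omega = M) ∧ ∀ r : FGraph, IsR2 r b → r.omega ≤ M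

/-- The bubble dimension `d̃_b = 2 - max_{r ∈ ℛ₂(b)} ω(r)`. -/
def HasBubbleDim (b : Bubble) (d : ℤ) : Prop :=
  ∃ M : ℤ, IsMaxOmega2 b M ∧ d = 2 - M

open Classical in
/-- The (unique, if any) successor of the 0-line `l` in the face of color `i`. -/
noncomputable def FGraph.nextL (G : FGraph) (i : Fin 4) (l : G.L) : Option G.L :=
  if h : ∃ l' : G.L, G.NextRel i l l' then some h.choose else none

/-- The ordered product of the group elements attached to the `k` consecutive
0-lines of the face of color `i` starting at `l`. -/
noncomputable def FGraph.holPath (G : FGraph) {Γ : Type*} [Monoid Γ]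
    (h : G.L → Γ) (i : Fin 4) : ℕ → G.L → Γ
  | 0, _ => 1
  | k + 1, l => h l * (G.nextL i l).elim 1 (fun l' => FGraph.holPath G h i k l')

/-! Induction along the generation of `𝔹`, with a stronger invariant: a necklace bubble is
either the 2-valent bubble or has two 2-dipoles sharing no node. The 2-valent bubble is a
unit for the connected sum. Otherwise each factor of `b₁ # b₂` keeps a 2-dipole avoiding the
node deleted by the sum, and these two dipoles survive in `b₁ # b₂`, disjoint. -/

namespace Bubble

theorem Iso.trans {b b' b'' : Bubble} (h : b.Iso b') (h' : b'.Iso b'') : b.Iso b'' := by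
  obtain ⟨eB, eW, he⟩ := h
  obtain ⟨eB', eW', he'⟩ := h'
  exact ⟨eB.trans eB', eW.trans eW', fun i x => by simp [he, he']⟩

theorem Iso.valency_eq {b b' : Bubble} (h : b.Iso b') : b.valency = b'.valency := by
  obtain ⟨eB, eW, -⟩ := h
  simp only [valency, Fintype.card_congr eB, Fintype.card_congr eW]

theorem isDipole_symm_iff {b : Bubble} {X Y : Type*} [DecidableEq Y] (eB : b.B ≃ X)
    (eW : b.W ≃ Y) (f : Fin 4 → X → Y) (hf : ∀ i x, eW (b.edge i x) = f i (eB x))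
    (n : X) (m : Y) (k : ℕ) :
    b.IsDipole (eB.symm n) (eW.symm m) k ↔ (univ.filter fun i => f i n = m).card = k := by
  have hfilter : (univ.filter fun i => b.edge i (eB.symm n) = eW.symm m) =
      univ.filter fun i => f i n = m :=
    filter_congr fun i _ => by rw [Equiv.eq_symm_apply, hf, Equiv.apply_symm_apply]
  rw [IsDipole, hfilter]

def HasTwoDisjointTwoDipoles (b : Bubble) : Prop :=
  ∃ (n n' : b.B) (m m' : b.W), n ≠ n' ∧ m ≠ m' ∧ b.IsDipole n m 2 ∧ b.IsDipole n' m' 2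

theorem Iso.hasTwoDisjointTwoDipoles {b b' : Bubble} (h : b.Iso b')
    (h' : b'.HasTwoDisjointTwoDipoles) : b.HasTwoDisjointTwoDipoles := by
  obtain ⟨eB, eW, he⟩ := h
  obtain ⟨n, n', m, m', hn, hm, hd, hd'⟩ := h'
  exact ⟨eB.symm n, eB.symm n', eW.symm m, eW.symm m', by simpa using hn, by simpa using hm,
    (isDipole_symm_iff eB eW (fun i => b'.edge i) he n m 2).2 hd,
    (isDipole_symm_iff eB eW (fun i => b'.edge i) he n' m' 2).2 hd'⟩

theorem HasTwoDisjointTwoDipoles.exists_isDipole_black_ne {b : Bubble}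
    (h : b.HasTwoDisjointTwoDipoles) (n : b.B) : ∃ x u, x ≠ n ∧ b.IsDipole x u 2 := by
  obtain ⟨x, x', u, u', hx, -, hd, hd'⟩ := h
  by_cases hxn : x = n
  · exact ⟨x', u', fun h => hx (hxn.trans h.symm), hd'⟩
  · exact ⟨x, u, hxn, hd⟩

theorem HasTwoDisjointTwoDipoles.exists_isDipole_white_ne {b : Bubble}
    (h : b.HasTwoDisjointTwoDipoles) (m : b.W) : ∃ y v, v ≠ m ∧ b.IsDipole y v 2 := by
  obtain ⟨y, y', v, v', -, hv, hd, hd'⟩ := h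
  by_cases hvm : v = m
  · exact ⟨y', v', fun h => hv (hvm.trans h.symm), hd'⟩
  · exact ⟨y, v, hvm, hd⟩

end Bubble

theorem twoValent_valency : twoValent.valency = 2 := rfl

theorem elemNecklace_hasTwoDisjointTwoDipoles (ℓ : Fin 3) :
    (elemNecklace ℓ).HasTwoDisjointTwoDipoles := by
  refine ⟨(0 : Fin 2), (1 : Fin 2), (0 : Fin 2), (1 : Fin 2), ?_⟩
  unfold Bubble.IsDipole elemNecklace
  fin_cases ℓ <;> decide

section ConnSum

variable {b b₁ b₂ : Bubble} {n₁ : b₁.B} {n₂ : b₂.W}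

theorem connSumEdge_inl_eq_inl_iff (i : Fin 4) (x : {x : b₁.B // x ≠ n₁}) (u : b₁.W) :
    connSumEdge b₁ b₂ n₁ n₂ i (.inl x) = .inl u ↔ b₁.edge i x = u := by
  simp [connSumEdge]

theorem connSumEdge_inr_eq_inr_iff (i : Fin 4) (y : b₂.B) (m : {y : b₂.W // y ≠ n₂}) :
    connSumEdge b₁ b₂ n₁ n₂ i (.inr y) = .inr m ↔ b₂.edge i y = m := by
  by_cases hy : b₂.edge i y = n₂
  · simp [connSumEdge, hy, Ne.symm m.2]
  · simp [connSumEdge, hy, Subtype.ext_iff]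

namespace IsConnSumAt

theorem iso_of_left_iso_twoValent (h : IsConnSumAt b b₁ b₂ n₁ n₂) (h₁ : b₁.Iso twoValent) :
    b.Iso b₂ := by
  obtain ⟨eB, eW, hc⟩ := h
  obtain ⟨fB, fW, -⟩ := h₁
  have := fB.subsingleton (β := PUnit)
  have := fW.subsingleton (β := PUnit)
  have : IsEmpty {x : b₁.B // x ≠ n₁} := ⟨fun x => x.2 (Subsingleton.elim _ _)⟩
  let e₁ : b₁.W ≃ {y : b₂.W // y = n₂} :=
    equivOfSubsingletonOfSubsingleton (fun _ => ⟨n₂, rfl⟩) (fun _ => b₁.edge 0 n₁)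
  refine ⟨eB.trans (Equiv.emptySum _ _),
    eW.trans ((Equiv.sumCongr e₁ (Equiv.refl _)).trans (Equiv.sumCompl (· = n₂))),
    fun i x => ?_⟩
  simp only [Equiv.trans_apply, hc]
  generalize eB x = N
  rcases N with x₁ | y
  · exact isEmptyElim x₁
  · by_cases hy : b₂.edge i y = n₂ <;> simp [connSumEdge, hy, (e₁ _).2]

theorem iso_of_right_iso_twoValent (h : IsConnSumAt b b₁ b₂ n₁ n₂) (h₂ : b₂.Iso twoValent) :
    b.Iso b₁ := by
  obtain ⟨eB, eW, hc⟩ := h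
  obtain ⟨fB, fW, -⟩ := h₂
  have := fB.subsingleton (β := PUnit)
  have := fW.subsingleton (β := PUnit)
  have : IsEmpty {y : b₂.W // y ≠ n₂} := ⟨fun y => y.2 (Subsingleton.elim _ _)⟩
  let e₂ : b₂.B ≃ {x : b₁.B // x = n₁} :=
    equivOfSubsingletonOfSubsingleton (fun _ => ⟨n₁, rfl⟩) (fun _ => (b₂.edge 0).symm n₂)
  refine ⟨eB.trans ((Equiv.sumComm _ _).trans
      ((Equiv.sumCongr e₂ (Equiv.refl _)).trans (Equiv.sumCompl (· = n₁)))),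
    eW.trans (Equiv.sumEmpty _ _), fun i x => ?_⟩
  simp only [Equiv.trans_apply, hc]
  generalize eB x = N
  rcases N with x₁ | y
  · simp [connSumEdge]
  · simp [connSumEdge, Subsingleton.elim (b₂.edge i y) n₂, (e₂ y).2]

theorem hasTwoDisjointTwoDipoles (h : IsConnSumAt b b₁ b₂ n₁ n₂)
    (h₁ : b₁.HasTwoDisjointTwoDipoles) (h₂ : b₂.HasTwoDisjointTwoDipoles) :
    b.HasTwoDisjointTwoDipoles := by
  obtain ⟨eB, eW, hc⟩ := h
  obtain ⟨x, u, hx, hxu⟩ := h₁.exists_isDipole_black_ne n₁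
  obtain ⟨y, m, hm, hym⟩ := h₂.exists_isDipole_white_ne n₂
  refine ⟨eB.symm (.inl ⟨x, hx⟩), eB.symm (.inr y), eW.symm (.inl u), eW.symm (.inr ⟨m, hm⟩),
    by simp, by simp, ?_, ?_⟩
  · rw [Bubble.isDipole_symm_iff eB eW _ hc]
    simpa only [connSumEdge_inl_eq_inl_iff, Bubble.IsDipole] using hxu
  · rw [Bubble.isDipole_symm_iff eB eW _ hc]
    simpa only [connSumEdge_inr_eq_inr_iff, Bubble.IsDipole] using hym

end IsConnSumAt

end ConnSum

theorem IsNecklace.iso_twoValent_or_hasTwoDisjointTwoDipoles {b : Bubble} (hb : IsNecklace b) :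
    b.Iso twoValent ∨ b.HasTwoDisjointTwoDipoles := by
  induction hb with
  | two h => exact .inl h
  | elem ℓ h => exact .inr (h.hasTwoDisjointTwoDipoles (elemNecklace_hasTwoDisjointTwoDipoles ℓ))
  | sum n₁ n₂ _ _ hs ih₁ ih₂ =>
    rcases ih₁ with h₁ | h₁
    · have hb₂ := hs.iso_of_left_iso_twoValent h₁
      exact ih₂.imp hb₂.trans hb₂.hasTwoDisjointTwoDipoles
    · rcases ih₂ with h₂ | h₂
      · exact .inr ((hs.iso_of_right_iso_twoValent h₂).hasTwoDisjointTwoDipoles h₁)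
      · exact .inr (hs.hasTwoDisjointTwoDipoles h₁ h₂)

/-- Every necklace bubble of valency at least `4` contains a 2-dipole. -/
theorem necklace_has_twoDipole (b : Bubble) (hb : IsNecklace b)
    (h4 : 4 ≤ b.valency) :
    ∃ (n : b.B) (m : b.W), b.IsDipole n m 2 := by
  rcases hb.iso_twoValent_or_hasTwoDisjointTwoDipoles with h | ⟨n, -, m, -, -, -, hd, -⟩
  · have h2 : b.valency = 2 := h.valency_eq.trans twoValent_valency
    omega
  · exact ⟨n, m, hd⟩
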